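/- A transitive frame F validates the scheme C_n if and only if F has circumference at most n and no strictly ascending chains. -/

import Mathlib

/-- Modal formulas: variables, ⊤, ¬, ∧, □. -/
inductive Fml : Type
  | var : ℕ → Fml
  | top : Fml
  | neg : Fml → Fml
  | and : Fml → Fml → Fml
  | box : Fml → Fml
deriving DecidableEq

namespace Fml
/-- Material implication, defined from ¬ and ∧. -/
def imp (φ ψ : Fml) : Fml := .neg (.and φ (.neg ψ))
/-- Disjunction. -/
def or (φ ψ : Fml) : Fml := .neg (.and (.neg φ) (.neg ψ))
/-- ◇φ := ¬□¬φ. -/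
def dia (φ : Fml) : Fml := .neg (.box (.neg φ))
/-- □*φ := φ ∧ □φ. -/
def boxs (φ : Fml) : Fml := .and φ (.box φ)
/-- ◇*φ := φ ∨ ◇φ. -/
def dias (φ : Fml) : Fml := Fml.or φ (dia φ)
end Fml

/-- Kripke satisfaction. -/
def sat {W : Type} (R : W → W → Prop) (V : ℕ → Set W) : W → Fml → Prop
  | x, .var p => x ∈ V p
  | _, .top => True
  | x, .neg φ => ¬ sat R V x φ
  | x, .and φ ψ => sat R V x φ ∧ sat R V x ψ
  | x, .box φ => ∀ y, R x y → sat R V y φ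

/-- P_n(φ0; φ1,...,φn): P_0(φ0) = ◇φ0, P_n(φ0,φ1,...,φn) = ◇(φ1 ∧ P_{n-1}(φ0,φ2,...,φn)). -/
def Pfml (φ0 : Fml) : List Fml → Fml
  | [] => φ0.dia
  | ψ :: rest => (Fml.and ψ (Pfml φ0 rest)).dia

/-- Conjunction of ¬(φ ∧ ψ) for ψ in the list. -/
def conjNeg (φ : Fml) : List Fml → Fml
  | [] => .top
  | ψ :: rest => .and (.neg (.and φ ψ)) (conjNeg φ rest)

/-- D_n: pairwise disjointness conjunction ⋀_{i<j} ¬(φ_i ∧ φ_j). -/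
def Dfml : List Fml → Fml
  | [] => .top
  | φ :: rest => .and (conjNeg φ rest) (Dfml rest)

/-- The scheme C_n instance on φ0,φ1,...,φn (φs = [φ1,...,φn]). -/
def Cfml (φ0 : Fml) (φs : List Fml) : Fml :=
  ((Dfml (φ0 :: φs)).boxs).imp ((φ0.dia).imp ((Fml.and φ0 (Fml.neg (Pfml φ0 φs))).dia))

/-- The scheme C_n* instance: as C_n but with ◇* in the consequent. -/
def CfmlStar (φ0 : Fml) (φs : List Fml) : Fml :=
  ((Dfml (φ0 :: φs)).boxs).imp ((φ0.dia).imp ((Fml.and φ0 (Fml.neg (Pfml φ0 φs))).dias))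

/-- An ascending R-chain. -/
def AscChain {W : Type} (R : W → W → Prop) (x : ℕ → W) : Prop := ∀ m, R (x m) (x (m+1))

/-- A strictly ascending R-chain. -/
def StrictAscChain {W : Type} (R : W → W → Prop) (x : ℕ → W) : Prop :=
  AscChain R x ∧ ∀ m, ¬ R (x (m+1)) (x m)

/-- The R-cluster of x. -/
def cluster {W : Type} (R : W → W → Prop) (x : W) : Set W := {y | x = y ∨ (R x y ∧ R y x)}

/-- The frame has a cycle of length k (k ≥ 1): k distinct points x_0 R x_1 R ... R x_{k-1} R x_0. -/
def HasCycle {W : Type} (R : W → W → Prop) (k : ℕ) : Prop :=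
  1 ≤ k ∧ ∃ x : ℕ → W, (∀ i j, i < k → j < k → x i = x j → i = j) ∧
    ∀ i < k, R (x i) (x ((i+1) % k))

/-- Circumference at most n: every cycle has length ≤ n. -/
def CircumLE {W : Type} (R : W → W → Prop) (n : ℕ) : Prop := ∀ k, HasCycle R k → k ≤ n

/-- The frame (W,R) validates the scheme C_n. -/
def ValidatesCn {W : Type} (R : W → W → Prop) (n : ℕ) : Prop :=
  ∀ (V : ℕ → Set W) (x : W) (φ0 : Fml) (φs : List Fml), φs.length = n →
    sat R V x (Cfml φ0 φs)

/-- A Boolean valuation on formulas (box-formulas and variables as atoms). -/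
def BoolEval (w : Fml → Bool) : Prop :=
  w .top = true ∧ (∀ φ, w (.neg φ) = !w φ) ∧ (∀ φ ψ, w (.and φ ψ) = (w φ && w ψ))

/-- Propositional tautologies. -/
def Tautology (φ : Fml) : Prop := ∀ w, BoolEval w → w φ = true

/-- Theorems of the smallest normal modal logic containing the axiom set Ax. -/
inductive Prov (Ax : Set Fml) : Fml → Prop
  | taut {φ} : Tautology φ → Prov Ax φ
  | kax (φ ψ) : Prov Ax ((Fml.box (φ.imp ψ)).imp ((Fml.box φ).imp (Fml.box ψ)))
  | ax {φ} : φ ∈ Ax → Prov Ax φ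
  | mp {φ ψ} : Prov Ax (φ.imp ψ) → Prov Ax φ → Prov Ax ψ
  | nec {φ} : Prov Ax φ → Prov Ax (.box φ)

/-- All instances of the transitivity scheme 4. -/
def Ax4 : Set Fml := {χ | ∃ φ, χ = (Fml.box φ).imp (Fml.box (Fml.box φ))}

/-- Axioms of K4C_n: scheme 4 together with all instances of scheme C_n. -/
def AxK4C (n : ℕ) : Set Fml :=
  Ax4 ∪ {χ | ∃ (φ0 : Fml) (φs : List Fml), φs.length = n ∧ χ = Cfml φ0 φs}

/-!
If `C_n` fails at `x`, every `φ₀`-successor `z` of `x` satisfies `P_n`, witnessed by a path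
`z = c₀ R c₁ R ⋯ R cₙ₊₁` labelled `φ₁, …, φₙ, φ₀`. By `D_n` the points `c₀, …, cₙ` are distinct, so
`cₙ₊₁ R z` would close a cycle of length `n + 1`; hence `cₙ₊₁` is a `φ₀`-successor of `x` strictly
above `z`, and iterating yields a strictly ascending chain. Conversely, a strictly ascending chain
or a cycle of length `> n` (all of whose points see each other, by transitivity) is an `R`-chain
on which colouring by the index mod `n + 1` is well defined, and such a colouring refutes `C_n`.
-/

section

variable {W : Type} {R : W → W → Prop}

section Semantics

variable {V : ℕ → Set W} {x : W}

lemma sat_imp {φ ψ : Fml} : sat R V x (φ.imp ψ) ↔ (sat R V x φ → sat R V x ψ) := by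
  simp only [Fml.imp, sat]
  tauto

lemma sat_dia {φ : Fml} : sat R V x φ.dia ↔ ∃ y, R x y ∧ sat R V y φ := by
  simp [Fml.dia, sat]

lemma sat_conjNeg {φ : Fml} {l : List Fml} :
    sat R V x (conjNeg φ l) ↔ ∀ ψ ∈ l, ¬ (sat R V x φ ∧ sat R V x ψ) := by
  induction l with
  | nil => simp [conjNeg, sat]
  | cons ψ l ih => simp [conjNeg, sat, ih]

lemma sat_Dfml {l : List Fml} :
    sat R V x (Dfml l) ↔ l.Pairwise (fun φ ψ => ¬ (sat R V x φ ∧ sat R V x ψ)) := by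
  induction l with
  | nil => simp [Dfml, sat]
  | cons φ l ih => simp only [Dfml, sat, sat_conjNeg, ih, List.pairwise_cons]

lemma sat_Pfml {φ0 : Fml} {l : List Fml} :
    sat R V x (Pfml φ0 l) ↔
      ∃ c : ℕ → W, c 0 = x ∧ (∀ i ≤ l.length, R (c i) (c (i + 1))) ∧
        (∀ i (h : i < l.length), sat R V (c (i + 1)) l[i]) ∧
        sat R V (c (l.length + 1)) φ0 := by
  induction l generalizing x with
  | nil =>
    rw [Pfml, sat_dia]
    constructor
    · rintro ⟨y, hxy, hy⟩
      exact ⟨fun i => if i = 0 then x else y, rfl, by simpa using hxy, by simp,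
        by simpa using hy⟩
    · rintro ⟨c, rfl, hc, -, hlast⟩
      exact ⟨c 1, hc 0 le_rfl, hlast⟩
  | cons ψ l ih =>
    rw [Pfml, sat_dia]
    constructor
    · rintro ⟨y, hxy, hψ, hP⟩
      obtain ⟨c, rfl, hc, hlab, hlast⟩ := ih.mp hP
      refine ⟨fun | 0 => x | i + 1 => c i, rfl, ?_, ?_, hlast⟩
      · rintro (_ | i) hi
        exacts [hxy, hc i (by simpa using hi)]
      · rintro (_ | i) hi
        exacts [hψ, hlab i (by simpa using hi)]
    · rintro ⟨c, rfl, hc, hlab, hlast⟩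
      refine ⟨c 1, hc 0 (by simp), hlab 0 (by simp),
        ih.mpr ⟨fun i => c (i + 1), rfl, fun i hi => hc (i + 1) (by simpa using hi),
          fun i hi => hlab (i + 1) (by simpa using hi), hlast⟩⟩

end Semantics

lemma hasCycle_of_path {n : ℕ} {c : ℕ → W}
    (hinj : ∀ i j, i ≤ n → j ≤ n → c i = c j → i = j) (hc : ∀ i < n, R (c i) (c (i + 1)))
    (hback : R (c n) (c 0)) : HasCycle R (n + 1) := by
  refine ⟨by omega, c, fun i j hi hj => hinj i j (by omega) (by omega), fun i hi => ?_⟩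
  rcases Nat.lt_or_ge i n with hin | hin
  · rw [Nat.mod_eq_of_lt (by omega : i + 1 < n + 1)]
    exact hc i hin
  · obtain rfl : i = n := by omega
    rwa [Nat.mod_self]

/-- Colour `c m` by the variable `m % (n + 1)`. Then `D_n` holds everywhere, and each point of
colour 0 is some `c m` with `(n + 1) ∣ m`, from which `c m, …, c (m + n + 1)` runs through the
colours `0, 1, …, n, 0` and so witnesses `P_n`; the instance fails at `c n`. -/
lemma not_validatesCn_of_chain_mod {n : ℕ} (c : ℕ → W) (hc : ∀ m, R (c m) (c (m + 1)))
    (hcol : ∀ i j, c i = c j → i % (n + 1) = j % (n + 1)) : ¬ ValidatesCn R n := by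
  intro hvalid
  let V : ℕ → Set W := fun j => {w | ∃ m, c m = w ∧ m % (n + 1) = j}
  let φs : List Fml := (List.range n).map fun i => .var (i + 1)
  have hD : ∀ w, sat R V w (Dfml (.var 0 :: φs)) := by
    intro w
    have hvars : (Fml.var 0 :: φs) = (List.range (n + 1)).map .var := by
      simp [φs, List.range_succ_eq_map]
    rw [hvars, sat_Dfml, List.pairwise_map]
    refine List.nodup_range.imp fun hij ⟨⟨m, hm, hmi⟩, ⟨m', hm', hm'j⟩⟩ => hij ?_
    rw [← hmi, ← hm'j, hcol m m' (hm.trans hm'.symm)]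
  have hP : ∀ m, m % (n + 1) = 0 → sat R V (c m) (Pfml (.var 0) φs) := by
    intro m hm
    obtain ⟨q, rfl⟩ := Nat.dvd_of_mod_eq_zero hm
    refine sat_Pfml.mpr
      ⟨fun i => c ((n + 1) * q + i), rfl, fun i _ => hc _, fun i hi => ?_, ?_⟩
    · simp only [φs, List.length_map, List.length_range] at hi
      simp only [φs, List.getElem_map, List.getElem_range]
      exact ⟨_, rfl, by rw [Nat.mul_add_mod, Nat.mod_eq_of_lt (by omega)]⟩
    · exact ⟨_, rfl, by simp [φs]⟩
  have hC := hvalid V (c n) (.var 0) φs (by simp [φs])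
  rw [Cfml, sat_imp, sat_imp, sat_dia, sat_dia] at hC
  obtain ⟨_, -, ⟨m, rfl, hm⟩, hnP⟩ :=
    hC ⟨hD _, fun w _ => hD w⟩ ⟨c (n + 1), hc n, n + 1, rfl, by simp⟩
  exact hnP (hP m hm)

lemma exists_strictAscChain {S : Set W} (hS : S.Nonempty)
    (h : ∀ z ∈ S, ∃ z' ∈ S, R z z' ∧ ¬ R z' z) : ∃ g, StrictAscChain R g := by
  choose! f hfS hf using h
  obtain ⟨z, hz⟩ := hS
  have hmem : ∀ m, f^[m] z ∈ S := fun m => by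
    induction m with
    | zero => exact hz
    | succ m ih => exact Function.iterate_succ_apply' f m z ▸ hfS _ ih
  refine ⟨fun m => f^[m] z, fun m => ?_, fun m => ?_⟩
  · simpa only [Function.iterate_succ_apply'] using (hf _ (hmem m)).1
  · simpa only [Function.iterate_succ_apply'] using (hf _ (hmem m)).2

variable [IsTrans W R]

lemma rel_of_lt_of_path {c : ℕ → W} {m : ℕ} (hc : ∀ i < m, R (c i) (c (i + 1))) {i j : ℕ}
    (hij : i < j) (hjm : j ≤ m) : R (c i) (c j) := by
  induction j, hij using Nat.le_induction with
  | base => exact hc i hjm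
  | succ j _ ih => exact trans_of R (ih (by omega)) (hc j hjm)

lemma rel_of_cycle {k : ℕ} {c : ℕ → W} (hc : ∀ i < k, R (c i) (c ((i + 1) % k))) {i j : ℕ}
    (hi : i < k) (hj : j < k) : R (c i) (c j) := by
  have hperiodic : ∀ m, R (c (m % k)) (c ((m + 1) % k)) := fun m => by
    simpa only [Nat.mod_add_mod] using hc (m % k) (Nat.mod_lt m (by omega))
  simpa only [Nat.mod_eq_of_lt hi, Nat.add_mod_right, Nat.mod_eq_of_lt hj] using
    Nat.rel_of_forall_rel_succ_of_lt R hperiodic (show i < j + k by omega)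

lemma StrictAscChain.injective {g : ℕ → W} (hg : StrictAscChain R g) :
    Function.Injective g := by
  let S : W → W → Prop := fun a b => R a b ∧ ¬ R b a
  have : IsTrans W S :=
    ⟨fun a b c hab hbc => ⟨trans_of R hab.1 hbc.1, fun hca => hbc.2 (trans_of R hca hab.1)⟩⟩
  have hS : ∀ ⦃a b⦄, a < b → S (g a) (g b) :=
    Nat.rel_of_forall_rel_succ_of_lt S fun m => ⟨hg.1 m, hg.2 m⟩
  intro a b hab
  by_contra hne
  rcases Nat.lt_or_gt_of_ne hne with h | h <;>
  · have hSb := hS h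
    rw [hab] at hSb
    exact hSb.2 hSb.1

lemma not_validatesCn_of_hasCycle {n k : ℕ} (hk : HasCycle R k) (hnk : n < k) :
    ¬ ValidatesCn R n := by
  obtain ⟨-, c, hinj, hc⟩ := hk
  have hmod : ∀ m, m % (n + 1) < k := fun m => (Nat.mod_lt m (by omega)).trans_le hnk
  exact not_validatesCn_of_chain_mod (fun m => c (m % (n + 1)))
    (fun m => rel_of_cycle hc (hmod m) (hmod (m + 1)))
    (fun i j h => hinj _ _ (hmod i) (hmod j) h)

lemma StrictAscChain.not_validatesCn {n : ℕ} {g : ℕ → W} (hg : StrictAscChain R g) :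
    ¬ ValidatesCn R n :=
  not_validatesCn_of_chain_mod g hg.1 fun _ _ h => by rw [hg.injective h]

lemma exists_rel_not_rel_of_sat_Pfml {n : ℕ} (hcirc : CircumLE R n) {V : ℕ → Set W}
    {φ0 : Fml} {φs : List Fml} (hlen : φs.length = n) {x z : W}
    (hD : ∀ y, R x y → sat R V y (Dfml (φ0 :: φs))) (hxz : R x z) (hz : sat R V z φ0)
    (hP : sat R V z (Pfml φ0 φs)) : ∃ z', R x z' ∧ sat R V z' φ0 ∧ R z z' ∧ ¬ R z' z := by
  subst hlen
  obtain ⟨c, rfl, hc, hlab, hlast⟩ := sat_Pfml.mp hP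
  have hc' : ∀ i < φs.length + 1, R (c i) (c (i + 1)) := fun i hi => hc i (by omega)
  have hxc : ∀ i ≤ φs.length + 1, R x (c i) := by
    intro i hi
    rcases Nat.eq_zero_or_pos i with rfl | hi0
    · exact hxz
    · exact trans_of R hxz (rel_of_lt_of_path hc' hi0 hi)
  have hlabel : ∀ i (h : i < (φ0 :: φs).length), sat R V (c i) (φ0 :: φs)[i]
    | 0, _ => hz
    | i + 1, h => hlab i (by simpa using h)
  have hinj : ∀ i j, i ≤ φs.length → j ≤ φs.length → c i = c j → i = j := by
    intro i j hi hj hij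
    by_contra hne
    have hi' : i < (φ0 :: φs).length := by rw [List.length_cons]; omega
    have hj' : j < (φ0 :: φs).length := by rw [List.length_cons]; omega
    have hpair := List.pairwise_iff_getElem.mp (sat_Dfml.mp (hD _ (hxc i (by omega))))
    have hj_at_i := hlabel j hj'
    rw [← hij] at hj_at_i
    rcases Nat.lt_or_gt_of_ne hne with h | h
    · exact hpair i j hi' hj' h ⟨hlabel i hi', hj_at_i⟩
    · exact hpair j i hj' hi' h ⟨hj_at_i, hlabel i hi'⟩
  -- via `c n R c (n + 1) R c 0`, the distinct points `c 0, …, c n` would form an `(n + 1)`-cycle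
  have hback : ¬ R (c (φs.length + 1)) (c 0) := fun h =>
    Nat.not_succ_le_self _ <| hcirc _ <|
      hasCycle_of_path hinj (fun i hi => hc i hi.le) (trans_of R (hc _ le_rfl) h)
  exact ⟨_, hxc _ le_rfl, hlast, rel_of_lt_of_path hc' (by omega) le_rfl, hback⟩

theorem validatesCn_of_circumLE {n : ℕ} (hcirc : CircumLE R n)
    (hchain : ¬ ∃ g, StrictAscChain R g) : ValidatesCn R n := by
  intro V x φ0 φs hlen
  simp only [Cfml, sat_imp, sat_dia]
  rintro ⟨-, hD⟩ ⟨y, hxy, hy⟩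
  by_contra hnone
  refine hchain (exists_strictAscChain (S := {z | R x z ∧ sat R V z φ0}) ⟨y, hxy, hy⟩ ?_)
  rintro z ⟨hxz, hz⟩
  have hP : sat R V z (Pfml φ0 φs) := by_contra fun h => hnone ⟨z, hxz, hz, h⟩
  obtain ⟨z', hxz', hz', hzz', hz'z⟩ :=
    exists_rel_not_rel_of_sat_Pfml hcirc hlen hD hxz hz hP
  exact ⟨z', ⟨hxz', hz'⟩, hzz', hz'z⟩

end

/-- a transitive frame validates the scheme C_n iff it has
circumference at most n and no strictly ascending chains. -/
theorem stmt5 {W : Type} (R : W → W → Prop) (hT : Transitive R) (n : ℕ) :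
    ValidatesCn R n ↔ (CircumLE R n ∧ ¬ ∃ x : ℕ → W, StrictAscChain R x) := by
  have : IsTrans W R := ⟨hT⟩
  refine ⟨fun hvalid => ⟨fun k hk => ?_, fun ⟨g, hg⟩ => hg.not_validatesCn hvalid⟩,
    fun ⟨hcirc, hchain⟩ => validatesCn_of_circumLE hcirc hchain⟩
  by_contra hkn
  exact not_validatesCn_of_hasCycle hk (not_le.mp hkn) hvalid
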